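/- arXiv:2111.03694 — 2 statements merged into one kernel-verified Lean document; each statement's English description precedes it below -/
import Mathlib

section
/- Fix an election on m candidates and n voters with plu(i) < 1 for every candidate i, and suppose β > 0 is such that every vector p ∈ ℝᵐ with nonnegative entries satisfying ∑_{j ≠ i} s_{i≻j}·p_j ≤ 1 − plu(i) for every candidate i also satisfies ∑_i p_i ≤ β. Then for every q ∈ ℝᵐ with nonnegative entries and ∑_i q_i = 1, there exists a candidate i such that ∑_{j=1}^m q_j·SC(j, d_i) ≥ (1 + 2/β)·SC(i, d_i), where d_i is the i-th (0,1,2,3)-metric of the election. (Hence no randomized election mechanism can guarantee distortion less than 1 + 2/β on this election.) -/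
/-- Fraction of the `n` voters who strictly prefer candidate `i` to candidate `j`.
A voter `v`'s preference order is encoded by `rk v : Fin m → Fin m`, an injective map
sending each candidate to its rank position (`0` = most preferred);
`i ≻_v j` means `rk v i < rk v j`. -/
noncomputable def sFrac {n m : ℕ} (rk : Fin n → Fin m → Fin m) (i j : Fin m) : ℝ :=
  ((Finset.univ.filter fun v => rk v i < rk v j).card : ℝ) / n

/-- Fraction of the voters whose top-ranked candidate is `i`. -/
noncomputable def pluFrac {n m : ℕ} (rk : Fin n → Fin m → Fin m) (i : Fin m) : ℝ :=
  ((Finset.univ.filter fun v => (rk v i : ℕ) = 0).card : ℝ) / n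


/-- The social cost of candidate `j` under the metric `d`: the average distance to voters. -/
noncomputable def socialCost {n m : ℕ} (d : Fin m → Fin n → ℝ) (j : Fin m) : ℝ :=
  (∑ v, d j v) / n

/-- The `(0,1,2,3)`-metric `d_i` of an election: `d_i(i,v) = 0` if `v` ranks `i` first and
`1` otherwise; for `j ≠ i`, `d_i(j,v) = d_i(i,v)` if `j ≻_v i` and `d_i(i,v) + 2` if
`i ≻_v j`. -/
noncomputable def dZ {n m : ℕ} (rk : Fin n → Fin m → Fin m) (i : Fin m) :
    Fin m → Fin n → ℝ :=
  fun j v =>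
    (if (rk v i : ℕ) = 0 then 0 else 1) +
      (if j = i then 0 else if rk v j < rk v i then 0 else 2)

/-- If every nonnegative `p` satisfying the `(0,1,2,3)`-metric LP constraints
`∑_{j ≠ i} s_{i≻j} p_j ≤ 1 - plu(i)` has `∑ p_i ≤ β`, then every probability vector `q`
has distortion at least `1 + 2/β` on some `(0,1,2,3)`-metric `d_i` of the election. -/
theorem lp_bound_implies_lower_bound
    (m n : ℕ) (hm : 0 < m) (hn : 0 < n)
    (rk : Fin n → Fin m → Fin m) (hrk : ∀ v, Function.Injective (rk v))
    (hplu : ∀ i, pluFrac rk i < 1)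
    (β : ℝ) (hβ : 0 < β)
    (hLP : ∀ p : Fin m → ℝ, (∀ i, 0 ≤ p i) →
      (∀ i : Fin m, ∑ j ∈ Finset.univ.filter (fun j => j ≠ i),
          sFrac rk i j * p j ≤ 1 - pluFrac rk i) →
      ∑ i, p i ≤ β)
    (q : Fin m → ℝ) (hq : ∀ i, 0 ≤ q i) (hq1 : ∑ i, q i = 1) :
    ∃ i : Fin m,
      (1 + 2 / β) * socialCost (dZ rk i) i ≤ ∑ j, q j * socialCost (dZ rk i) j := by
  classical
  by_contra hcon
  push_neg at hcon
  have hn' : (0:ℝ) < n := by exact_mod_cast hn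
  -- base sum
  have hbase : ∀ i : Fin m, ∑ v : Fin n, (if (rk v i : ℕ) = 0 then (0:ℝ) else 1)
      = n - ((Finset.univ.filter fun v => (rk v i : ℕ) = 0).card : ℝ) := by
    intro i
    have h1 : ∀ v : Fin n, (if (rk v i : ℕ) = 0 then (0:ℝ) else 1)
        = 1 - (if (rk v i : ℕ) = 0 then (1:ℝ) else 0) := by
      intro v; split <;> norm_num
    rw [Finset.sum_congr rfl fun v _ => h1 v, Finset.sum_sub_distrib]
    simp [Finset.sum_boole]
  have hscself : ∀ i : Fin m, socialCost (dZ rk i) i = 1 - pluFrac rk i := by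
    intro i
    unfold socialCost dZ pluFrac
    simp only [eq_self_iff_true, if_true, add_zero]
    rw [hbase i]
    field_simp
  have hscother : ∀ i j : Fin m, j ≠ i →
      socialCost (dZ rk i) j = (1 - pluFrac rk i) + 2 * sFrac rk i j := by
    intro i j hij
    unfold socialCost dZ pluFrac sFrac
    have h2 : ∀ v : Fin n, (if (rk v i : ℕ) = 0 then (0:ℝ) else 1) +
          (if j = i then (0:ℝ) else if rk v j < rk v i then 0 else 2)
        = (if (rk v i : ℕ) = 0 then (0:ℝ) else 1) +
          (if rk v i < rk v j then (2:ℝ) else 0) := by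
      intro v
      rw [if_neg hij]
      have hne : rk v i ≠ rk v j := fun h => hij ((hrk v h).symm)
      rcases lt_or_gt_of_ne hne with h | h
      · rw [if_neg (asymm h), if_pos h]
      · rw [if_pos h, if_neg (asymm h)]
    rw [Finset.sum_congr rfl fun v _ => h2 v, Finset.sum_add_distrib, hbase i]
    have h3 : ∑ v : Fin n, (if rk v i < rk v j then (2:ℝ) else 0)
        = 2 * ((Finset.univ.filter fun v => rk v i < rk v j).card : ℝ) := by
      rw [Finset.sum_ite, Finset.sum_const, Finset.sum_const_zero, add_zero,
        nsmul_eq_mul, mul_comm]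
    rw [h3]
    field_simp
    try ring
  -- weighted sum formula
  set S : Fin m → ℝ := fun i =>
    ∑ j ∈ Finset.univ.filter (fun j => j ≠ i), sFrac rk i j * q j with hS
  have hsum : ∀ i, ∑ j, q j * socialCost (dZ rk i) j
      = (1 - pluFrac rk i) + 2 * S i := by
    intro i
    have h4 : ∀ j : Fin m, q j * socialCost (dZ rk i) j
        = q j * (1 - pluFrac rk i) + (if j = i then 0 else 2 * (sFrac rk i j * q j)) := by
      intro j
      by_cases h : j = i
      · subst h; rw [hscself, if_pos rfl]; ring
      · rw [hscother i j h, if_neg h]; ring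
    rw [Finset.sum_congr rfl fun j _ => h4 j, Finset.sum_add_distrib,
      ← Finset.sum_mul, hq1, one_mul]
    congr 1
    rw [Finset.sum_ite, Finset.sum_const_zero, zero_add, hS, Finset.mul_sum]
  -- nonnegativity
  have hsnn : ∀ i j, 0 ≤ sFrac rk i j := by
    intro i j
    exact div_nonneg (by positivity) (by positivity)
  have hSnn : ∀ i, 0 ≤ S i :=
    fun i => Finset.sum_nonneg fun j _ => mul_nonneg (hsnn i j) (hq j)
  have hplu' : ∀ i, 0 < 1 - pluFrac rk i := fun i => by linarith [hplu i]
  -- strict inequality on S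
  have hSlt : ∀ i, S i < (1 - pluFrac rk i) / β := by
    intro i
    have := hcon i
    rw [hsum i, hscself i] at this
    have h5 : 2 * S i < (2 / β) * (1 - pluFrac rk i) := by nlinarith
    have h6 : (2 / β) * (1 - pluFrac rk i) = 2 * ((1 - pluFrac rk i) / β) := by ring
    linarith [h5, h6.symm ▸ h5]
  -- build the scaling factor
  have hmne : (Finset.univ : Finset (Fin m)).Nonempty := by
    have : Nonempty (Fin m) := Fin.pos_iff_nonempty.mp hm
    exact Finset.univ_nonempty
  set F : Fin m → ℝ := fun i =>
    if 0 < S i then (1 - pluFrac rk i) / S i else β + 1 with hF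
  set lam : ℝ := Finset.univ.inf' hmne F with hlam
  have hlamβ : β < lam := by
    rw [hlam, Finset.lt_inf'_iff]
    intro i _
    simp only [hF]
    by_cases h : 0 < S i
    · rw [if_pos h]
      rw [lt_div_iff₀ h]
      have := hSlt i
      rw [lt_div_iff₀ hβ] at this
      linarith
    · rw [if_neg h]; linarith
  have hlamle : ∀ i, lam * S i ≤ 1 - pluFrac rk i := by
    intro i
    by_cases h : 0 < S i
    · have hle : lam ≤ F i := Finset.inf'_le _ (Finset.mem_univ i)
      simp only [hF] at hle
      rw [if_pos h] at hle
      calc lam * S i ≤ ((1 - pluFrac rk i) / S i) * S i :=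
            mul_le_mul_of_nonneg_right hle (le_of_lt h)
        _ = 1 - pluFrac rk i := by field_simp
    · have hz : S i = 0 := le_antisymm (not_lt.mp h) (hSnn i)
      rw [hz, mul_zero]
      exact le_of_lt (hplu' i)
  -- apply the LP hypothesis to lam • q
  have hfin := hLP (fun j => lam * q j)
    (fun j => mul_nonneg (le_of_lt (lt_trans hβ hlamβ)) (hq j))
    (by
      intro i
      have : ∑ j ∈ Finset.univ.filter (fun j => j ≠ i), sFrac rk i j * (lam * q j)
          = lam * S i := by
        rw [hS, Finset.mul_sum]
        exact Finset.sum_congr rfl fun j _ => by ring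
      rw [this]
      exact hlamle i)
  have : ∑ i, lam * q i = lam := by rw [← Finset.mul_sum, hq1, mul_one]
  rw [this] at hfin
  linarith
end

section
/- Fix an election on m candidates and n voters and a candidate i, and let d_i be its (0,1,2,3)-metric. Then SC(i, d_i) = 1 − plu(i); for every candidate j ≠ i, SC(j, d_i) = 1 − plu(i) + 2·s_{i≻j}; and consequently min_{j} SC(j, d_i) = SC(i, d_i). -/
lemma first_sum {n m : ℕ} (hn : 0 < n) (rk : Fin n → Fin m → Fin m) (i : Fin m) :
    (∑ v : Fin n, (if (rk v i : ℕ) = 0 then (0:ℝ) else 1)) / n = 1 - pluFrac rk i := by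
  have hsum : (∑ v : Fin n, (if (rk v i : ℕ) = 0 then (0:ℝ) else 1))
      = ((Finset.univ.filter fun v : Fin n => ¬ ((rk v i : ℕ) = 0)).card : ℝ) := by
    rw [Finset.sum_ite]
    simp
  rw [hsum, pluFrac, Finset.filter_not, Finset.card_sdiff_of_subset (Finset.filter_subset _ _),
    Finset.card_univ, Fintype.card_fin]
  have hle : (Finset.univ.filter fun v : Fin n => (rk v i : ℕ) = 0).card ≤ n := by
    have := Finset.card_filter_le (Finset.univ : Finset (Fin n))
      (fun v => (rk v i : ℕ) = 0)
    simpa using this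
  have hn' : (n : ℝ) ≠ 0 := Nat.cast_ne_zero.mpr hn.ne'
  rw [Nat.cast_sub hle]
  field_simp

/-- Social costs under the `(0,1,2,3)`-metric `d_i`: `SC(i,d_i) = 1 - plu(i)`;
for `j ≠ i`, `SC(j,d_i) = 1 - plu(i) + 2 s_{i≻j}`; consequently
`min_j SC(j,d_i) = SC(i,d_i)`. -/
theorem dZ_social_costs
    (m n : ℕ) (hm : 0 < m) (hn : 0 < n)
    (rk : Fin n → Fin m → Fin m) (hrk : ∀ v, Function.Injective (rk v))
    (i : Fin m) :
    socialCost (dZ rk i) i = 1 - pluFrac rk i ∧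
    (∀ j : Fin m, j ≠ i →
      socialCost (dZ rk i) j = 1 - pluFrac rk i + 2 * sFrac rk i j) ∧
    (∀ j : Fin m, socialCost (dZ rk i) i ≤ socialCost (dZ rk i) j) := by
  have hn' : (n : ℝ) ≠ 0 := Nat.cast_ne_zero.mpr hn.ne'
  have hSCi : socialCost (dZ rk i) i = 1 - pluFrac rk i := by
    rw [socialCost]
    simp only [dZ, eq_self_iff_true, if_true, add_zero]
    exact first_sum hn rk i
  have hSCj : ∀ j : Fin m, j ≠ i →
      socialCost (dZ rk i) j = 1 - pluFrac rk i + 2 * sFrac rk i j := by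
    intro j hj
    rw [socialCost]
    simp only [dZ, if_neg hj]
    rw [Finset.sum_add_distrib, add_div, first_sum hn rk i]
    congr 1
    have hsum : (∑ v : Fin n, (if rk v j < rk v i then (0:ℝ) else 2))
        = 2 * ((Finset.univ.filter fun v : Fin n => rk v i < rk v j).card : ℝ) := by
      have hpoint : ∀ v : Fin n, (if rk v j < rk v i then (0:ℝ) else 2)
          = (if rk v i < rk v j then (2:ℝ) else 0) := by
        intro v
        have hne : rk v j ≠ rk v i := fun h => hj (hrk v h)
        rcases lt_or_gt_of_ne hne with h | h
        · simp [h, asymm h]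
        · simp [h, asymm h]
      simp only [hpoint]
      rw [← Finset.sum_filter, Finset.sum_const, nsmul_eq_mul, mul_comm]
    rw [hsum, sFrac]
    ring
  refine ⟨hSCi, hSCj, fun j => ?_⟩
  rcases eq_or_ne j i with rfl | hj
  · exact le_refl _
  · rw [hSCi, hSCj j hj]
    have : 0 ≤ 2 * sFrac rk i j := by
      apply mul_nonneg (by norm_num)
      exact div_nonneg (Nat.cast_nonneg _) (Nat.cast_nonneg _)
    linarith
end
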